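/- arXiv:1807.00164 — 3 statements merged into one kernel-verified Lean document; each statement's English description precedes it below -/
import Mathlib

section
/- In a Jordan algebra over a field of characteristic not 2, for all a, b, c the normalisation equation holds: T_{a*(b*c)} = T_a T_{b*c} + T_b T_{a*c} + T_c T_{a*b} - T_b T_a T_c - T_c T_a T_b. -/
/-!
Polarising the Jordan identity `a (b a²) = (a b) a²` fully in `a` gives the quadrilinear identity
`a (b (c d)) + c (b (a d)) + d (b (a c)) = (a b) (c d) + (c b) (a d) + (d b) (a c)`,
up to a factor `2` coming from `a²`. Instantiating it at `(x, a, b, c)` and at `(a, x, b, c)` and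
subtracting, the products `(x a) (b c)`, `(a b) (x c)`, `(a c) (x b)` cancel, and what remains,
read as an identity in `x`, is the operator identity.
-/

theorem jordan_polarized {F V : Type*} [Field F] [AddCommGroup V] [Module F V]
    (mul : V →ₗ[F] V →ₗ[F] V) (h2 : (2 : F) ≠ 0) (comm : ∀ a b : V, mul a b = mul b a)
    (jordan : ∀ a b : V, mul a (mul b (mul a a)) = mul (mul a b) (mul a a)) (a b c d : V) :
    mul a (mul b (mul c d)) + mul c (mul b (mul a d)) + mul d (mul b (mul a c)) =
      mul (mul a b) (mul c d) + mul (mul c b) (mul a d) + mul (mul d b) (mul a c) := by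
  have hacd := jordan (a + c + d) b
  have hac := jordan (a + c) b
  have had := jordan (a + d) b
  have hcd := jordan (c + d) b
  simp only [map_add, LinearMap.add_apply, comm c a, comm d a, comm d c] at hacd hac had hcd
  -- Inclusion-exclusion over `{a, c, d}` extracts the part of the cubic identity that is linear
  -- in each of `a, c, d`, which is twice the claim.
  apply smul_right_injective V h2
  linear_combination (norm := module)
    hacd - hac - had - hcd + jordan a b + jordan c b + jordan d b

theorem stmt4 {F V : Type*} [Field F] (h2 : (2 : F) ≠ 0)
    [AddCommGroup V] [Module F V]
    (mul : V →ₗ[F] V →ₗ[F] V)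
    (comm : ∀ a b : V, mul a b = mul b a)
    (jordan : ∀ a b : V, mul a (mul b (mul a a)) = mul (mul a b) (mul a a)) :
    ∀ a b c : V, mul (mul a (mul b c)) = mul a * mul (mul b c) + mul b * mul (mul a c) + mul c * mul (mul a b) - mul b * mul a * mul c - mul c * mul a * mul b := by
  intro a b c
  ext x
  simp only [Module.End.mul_apply, LinearMap.add_apply, LinearMap.sub_apply]
  have hx := jordan_polarized mul h2 comm jordan x a b c
  have ha := jordan_polarized mul h2 comm jordan a x b c
  rw [comm x (mul a (mul b c)), comm x c, comm x b, comm x a, comm b a, comm c a] at hx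
  rw [comm x (mul b c), comm x (mul a c), comm x (mul a b),
    comm (mul b x) (mul a c), comm (mul c x) (mul a b)] at ha
  linear_combination (norm := module) hx - ha
end

section
/- In a Jordan algebra over a field of characteristic not 2, for all a, b: [T_{a*b}, T_{a^2}] = 2( T_a^2 [T_a, T_b] + [T_a, T_b] T_a^2 - [T_a T_{a^2}, T_b] ). -/
/-!
Linearizing the Jordan identity `(a, x, a²) = 0` once in `a` and then fully gives operator identities
between `T_a`, `T_b`, `T_{ab}`, `T_{a²}` and `T_{a(ab)}`. One of them gives
`[T_{ab}, T_{a²}] = 2 [T_{a(ab)}, T_a]`. Another writes `T_{a(ab)}` in terms of `T_a`, `T_b`, `T_{ab}` and `T_{a²}`.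
Substituting it and simplifying with `[T_b, T_{a²}] = 2 [T_{ab}, T_a]` and `[T_a, T_{a²}] = 0`
gives the claimed expression.
-/

section JordanOperators

variable {F V : Type*} [Field F] [AddCommGroup V] [Module F V] (mul : V →ₗ[F] V →ₗ[F] V)

theorem jordan_polarization (h2 : (2 : F) ≠ 0)
    (jordan : ∀ a b : V, mul a (mul b (mul a a)) = mul (mul a b) (mul a a)) (u c x : V) :
    mul u (mul x (mul u c)) + mul u (mul x (mul c u)) + mul c (mul x (mul u u))
      = mul (mul u x) (mul u c) + mul (mul u x) (mul c u) + mul (mul c x) (mul u u) := by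
  apply smul_right_injective V h2
  have hp := jordan (u + c) x
  have hm := jordan (u - c) x
  simp only [map_add, map_sub, LinearMap.add_apply, LinearMap.sub_apply] at hp hm
  linear_combination (norm := module) hp - hm - (2 : F) • jordan c x

theorem jordan_linearization (h2 : (2 : F) ≠ 0) (comm : ∀ a b : V, mul a b = mul b a)
    (jordan : ∀ a b : V, mul a (mul b (mul a a)) = mul (mul a b) (mul a a)) (u v w y : V) :
    mul u (mul y (mul v w)) + mul v (mul y (mul u w)) + mul w (mul y (mul u v))
      = mul (mul u y) (mul v w) + mul (mul v y) (mul u w) + mul (mul w y) (mul u v) := by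
  apply smul_right_injective V h2
  have hp := jordan_polarization mul h2 jordan (u + v) w y
  have hu := jordan_polarization mul h2 jordan u w y
  have hv := jordan_polarization mul h2 jordan v w y
  simp only [map_add, LinearMap.add_apply] at hp
  simp only [comm w u, comm w v, comm v u] at hp hu hv ⊢
  linear_combination (norm := module) hp - hu - hv

theorem commute_mul_mul_self (comm : ∀ a b : V, mul a b = mul b a)
    (jordan : ∀ a b : V, mul a (mul b (mul a a)) = mul (mul a b) (mul a a)) (a : V) :
    Commute (mul a) (mul (mul a a)) := by
  ext x
  have h := jordan a x
  rw [comm x (mul a a), comm (mul a x) (mul a a)] at h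
  exact h

theorem commutator_mul_mul_sq (h2 : (2 : F) ≠ 0) (comm : ∀ a b : V, mul a b = mul b a)
    (jordan : ∀ a b : V, mul a (mul b (mul a a)) = mul (mul a b) (mul a a)) (a b : V) :
    mul b * mul (mul a a) - mul (mul a a) * mul b
      = 2 • (mul (mul a b) * mul a) - 2 • (mul a * mul (mul a b)) := by
  ext x
  simp only [Module.End.mul_apply, LinearMap.sub_apply, LinearMap.smul_apply]
  have h := jordan_polarization mul h2 jordan a b x
  rw [comm b a, comm x (mul a b), comm (mul a x) (mul a b), comm x (mul a a),
    comm (mul b x) (mul a a)] at h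
  linear_combination (norm := module) h

theorem mul_mul_mul_left_eq (h2 : (2 : F) ≠ 0) (comm : ∀ a b : V, mul a b = mul b a)
    (jordan : ∀ a b : V, mul a (mul b (mul a a)) = mul (mul a b) (mul a a)) (a b : V) :
    mul (mul a (mul a b))
      = 2 • (mul (mul a b) * mul a) + mul (mul a a) * mul b
        - mul a * mul a * mul b - mul b * (mul a * mul a) := by
  ext x
  simp only [Module.End.mul_apply, LinearMap.sub_apply, LinearMap.add_apply,
    LinearMap.smul_apply]
  have h := jordan_linearization mul h2 comm jordan x a b a
  rw [comm x (mul a (mul a b)), comm x b, comm x a, comm b a,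
    comm (mul a x) (mul a b)] at h
  linear_combination (norm := module) h

theorem commutator_mul_mul_mul_sq (h2 : (2 : F) ≠ 0) (comm : ∀ a b : V, mul a b = mul b a)
    (jordan : ∀ a b : V, mul a (mul b (mul a a)) = mul (mul a b) (mul a a)) (a b : V) :
    mul (mul a b) * mul (mul a a) - mul (mul a a) * mul (mul a b)
      = 2 • (mul (mul a (mul a b)) * mul a) - 2 • (mul a * mul (mul a (mul a b))) := by
  ext x
  simp only [Module.End.mul_apply, LinearMap.sub_apply, LinearMap.smul_apply]
  have h := jordan_linearization mul h2 comm jordan a a (mul a b) x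
  rw [comm x (mul a (mul a b)), comm x (mul a a),
    comm (mul a x) (mul a (mul a b)), comm (mul (mul a b) x) (mul a a)] at h
  linear_combination (norm := module) h

theorem commutator_mul_mul_mul_left_mul (h2 : (2 : F) ≠ 0) (comm : ∀ a b : V, mul a b = mul b a)
    (jordan : ∀ a b : V, mul a (mul b (mul a a)) = mul (mul a b) (mul a a)) (a b : V) :
    mul (mul a (mul a b)) * mul a - mul a * mul (mul a (mul a b))
      = (mul a) ^ 2 * (mul a * mul b - mul b * mul a)
        + (mul a * mul b - mul b * mul a) * (mul a) ^ 2
        - (mul a * mul (mul a a) * mul b - mul b * (mul a * mul (mul a a))) := by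
  have hT := commutator_mul_mul_sq mul h2 comm jordan a b
  have hA := commute_mul_mul_self mul comm jordan a
  rw [← sub_eq_zero, mul_mul_mul_left_eq mul h2 comm jordan a b]
  calc _ = (2 • (mul (mul a b) * mul a) - 2 • (mul a * mul (mul a b))
            - (mul b * mul (mul a a) - mul (mul a a) * mul b)) * mul a
          + (mul b * (mul (mul a a) * mul a) - mul b * (mul a * mul (mul a a))) := by
        simp only [two_smul]
        noncomm_ring
    _ = 0 := by simp [hT, hA.eq]

end JordanOperators

theorem stmt6 {F V : Type*} [Field F] (h2 : (2 : F) ≠ 0)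
    [AddCommGroup V] [Module F V]
    (mul : V →ₗ[F] V →ₗ[F] V)
    (comm : ∀ a b : V, mul a b = mul b a)
    (jordan : ∀ a b : V, mul a (mul b (mul a a)) = mul (mul a b) (mul a a)) :
    ∀ a b : V, mul (mul a b) * mul (mul a a) - mul (mul a a) * mul (mul a b) = 2 • ((mul a) ^ 2 * (mul a * mul b - mul b * mul a) + (mul a * mul b - mul b * mul a) * (mul a) ^ 2 - (mul a * mul (mul a a) * mul b - mul b * (mul a * mul (mul a a)))) := by
  intro a b
  rw [commutator_mul_mul_mul_sq mul h2 comm jordan, ← smul_sub,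
    commutator_mul_mul_mul_left_mul mul h2 comm jordan]
end

section
/- In a Jordan algebra over a field of characteristic not 2, the quadratic representation satisfies Q_{a^3} = Q_a^3 for every a, where a^3 := a*(a*a). -/
/-!
Linearizing the Jordan identity in `a` gives the operator identity
`T_{b∘a²} + 2 T_a T_b T_a = T_{a²} T_b + 2 T_{a∘b} T_a`. Taking `b = a` expresses `T_{a³}` through the
commuting operators `T_a` and `T_{a²}`, and taking `b = a²` does the same for `T_{a²∘a²}`.
Since moreover `a³∘a³ = a²∘(a²∘a²)`, both `Q_{a³}` and `Q_a³ = (2T_a² - T_{a²})³` become polynomials in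
the commuting operators `T_a, T_{a²}`, and they agree.
-/

structure IsJordanProduct {R V : Type*} [CommRing R] [AddCommGroup V] [Module R V]
    (mul : V →ₗ[R] V →ₗ[R] V) : Prop where
  comm : ∀ a b : V, mul a b = mul b a
  jordan : ∀ a b : V, mul a (mul b (mul a a)) = mul (mul a b) (mul a a)

open scoped IsMulCommutative in
theorem Commute.jordan_cube_identity {A : Type*} [Ring A] {x y : A} (h : Commute x y) :
    2 • ((3 * (y * x) - 2 * x ^ 3) * (3 * (y * x) - 2 * x ^ 3)) -
        (3 * ((y ^ 2 + 2 * ((3 * (y * x) - 2 * x ^ 3) * x) - 2 * (x * y * x)) * y) - 2 * y ^ 3) =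
      (2 • (x * x) - y) ^ 3 := by
  -- `x` and `y` generate a commutative subalgebra, in which the identity is a `ring` identity.
  have := Algebra.isMulCommutative_adjoin ℤ (s := {x, y}) (by
    simp only [Set.mem_insert_iff, Set.mem_singleton_iff]
    rintro a (rfl | rfl) b (rfl | rfl) <;> first | rfl | exact h.eq | exact h.eq.symm)
  let X : Algebra.adjoin ℤ {x, y} := ⟨x, Algebra.subset_adjoin (by simp)⟩
  let Y : Algebra.adjoin ℤ {x, y} := ⟨y, Algebra.subset_adjoin (by simp)⟩
  have key : 2 • ((3 * (Y * X) - 2 * X ^ 3) * (3 * (Y * X) - 2 * X ^ 3)) -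
        (3 * ((Y ^ 2 + 2 * ((3 * (Y * X) - 2 * X ^ 3) * X) - 2 * (X * Y * X)) * Y) - 2 * Y ^ 3) =
      (2 • (X * X) - Y) ^ 3 := by
    ring
  exact congrArg Subtype.val key

namespace IsJordanProduct

variable {R V : Type*} [CommRing R] [AddCommGroup V] [Module R V] {mul : V →ₗ[R] V →ₗ[R] V}

theorem linearized (hJ : IsJordanProduct mul) (h2 : IsSMulRegular V (2 : R)) (a x b : V) :
    mul a (mul b (mul x x)) + (2 : R) • mul x (mul b (mul a x)) =
      mul (mul a b) (mul x x) + (2 : R) • mul (mul x b) (mul a x) := by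
  have hplus := hJ.jordan (a + x) b
  have hminus := hJ.jordan (a - x) b
  have ha := hJ.jordan a b
  simp only [map_add, map_sub, LinearMap.add_apply, LinearMap.sub_apply] at hplus hminus
  rw [hJ.comm x a] at hplus hminus
  apply h2
  -- this combination is twice the part of `jordan (a + x) b` that is linear in `a`
  linear_combination (norm := module) hplus + hminus - (2 : R) • ha

theorem linearized_op (hJ : IsJordanProduct mul) (h2 : IsSMulRegular V (2 : R)) (x b : V) :
    mul (mul b (mul x x)) + 2 * (mul x * mul b * mul x) =
      mul (mul x x) * mul b + 2 * (mul (mul x b) * mul x) := by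
  ext a
  have h := hJ.linearized h2 a x b
  rw [hJ.comm a (mul b (mul x x)), hJ.comm a b, hJ.comm (mul b a), hJ.comm a x] at h
  simpa [Module.End.ofNat_apply, ofNat_smul_eq_nsmul (R := R)] using h

theorem commute_sq (hJ : IsJordanProduct mul) (a : V) : Commute (mul a) (mul (mul a a)) := by
  ext b
  simp only [Module.End.mul_apply]
  rw [hJ.comm (mul a a) b, hJ.jordan, hJ.comm (mul a a)]

theorem mul_cube (hJ : IsJordanProduct mul) (h2 : IsSMulRegular V (2 : R)) (a : V) :
    mul (mul a (mul a a)) = 3 * (mul (mul a a) * mul a) - 2 * mul a ^ 3 := by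
  have h := hJ.linearized_op h2 a a
  rw [eq_sub_iff_add_eq, pow_three', h]
  noncomm_ring

theorem mul_sq_sq (hJ : IsJordanProduct mul) (h2 : IsSMulRegular V (2 : R)) (a : V) :
    mul (mul (mul a a) (mul a a)) =
      mul (mul a a) ^ 2 + 2 * (mul (mul a (mul a a)) * mul a) - 2 * (mul a * mul (mul a a) * mul a) := by
  rw [eq_sub_iff_add_eq, hJ.linearized_op h2 a (mul a a), sq]

theorem commute_cube (hJ : IsJordanProduct mul) (h2 : IsSMulRegular V (2 : R)) (a : V) :
    Commute (mul a) (mul (mul a (mul a a))) := by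
  rw [hJ.mul_cube h2]
  exact (((Commute.ofNat_right _ 3).mul_right ((hJ.commute_sq a).mul_right (.refl _))).sub_right
    ((Commute.ofNat_right _ 2).mul_right ((Commute.refl _).pow_right 3)))

theorem cube_mul_cube (hJ : IsJordanProduct mul) (h2 : IsSMulRegular V (2 : R)) (a : V) :
    mul (mul a (mul a a)) (mul a (mul a a)) = mul (mul a a) (mul (mul a a) (mul a a)) := by
  calc mul (mul a (mul a a)) (mul a (mul a a))
      = mul a (mul (mul a (mul a a)) (mul a a)) := by
        simpa using congrArg (· (mul a a)) (hJ.commute_cube h2 a).eq.symm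
    _ = mul (mul a a) (mul a (mul a (mul a a))) := by
        rw [hJ.comm (mul a (mul a a))]
        simpa using congrArg (· (mul a (mul a a))) (hJ.commute_sq a).eq
    _ = mul (mul a a) (mul (mul a a) (mul a a)) := by rw [hJ.jordan]

end IsJordanProduct

theorem stmt11 {F V : Type*} [Field F] (h2 : (2 : F) ≠ 0)
    [AddCommGroup V] [Module F V]
    (mul : V →ₗ[F] V →ₗ[F] V)
    (comm : ∀ a b : V, mul a b = mul b a)
    (jordan : ∀ a b : V, mul a (mul b (mul a a)) = mul (mul a b) (mul a a))
    (Q : V → Module.End F V)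
    (hQ : ∀ a : V, Q a = 2 • (mul a * mul a) - mul (mul a a)) :
    ∀ a : V, Q (mul a (mul a a)) = (Q a) ^ 3 := by
  intro a
  have hJ : IsJordanProduct mul := ⟨comm, jordan⟩
  have h2' : IsSMulRegular V (2 : F) := smul_right_injective V h2
  rw [hQ, hQ, hJ.cube_mul_cube h2', hJ.mul_cube h2' (mul a a), hJ.mul_sq_sq h2', hJ.mul_cube h2' a]
  exact (hJ.commute_sq a).jordan_cube_identity
end
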